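/- arXiv:1307.4488 — 3 statements merged into one kernel-verified Lean document; each statement's English description precedes it below -/
import Mathlib

section
/- For the adjunction T ⊣ U between presheaves Pre(O_F, U) and G-spaces GU, where U(Y)(G/H) = Y^H and T(X) = X_{G/e}: the counit ε: TU → Id is the identity natural transformation, U is full and faithful, and T(Y(G/H)) ≅ G/H where Y(G/H) is the presheaf represented by G/H. -/
/-!
The free orbit `G ⧸ ⊥` is the coyoneda functor of `SingleObj G` in disguise, so maps
`G ⧸ ⊥ ⟶ Y` are the points of `Y` and `U(Y)(G/e) ≅ Y`; the `G`-endomorphisms of `G ⧸ ⊥` are the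
right multiplications, and through them a presheaf `X` makes `T(X) = X(G/e)` a `G`-set. Thus
`T ∘ U ≅ Id` is the counit. The unit sends `x ∈ X(G/H)` to the `G`-map `G/H → X(G/e)` taking `s`
to the pullback of `x` along the orbit map `G/e → G/H` through `s`, and both triangle identities
are Yoneda computations. A right adjoint whose counit is invertible is fully faithful.
-/

open CategoryTheory Limits Opposite

universe u

/-- The `G`-set `S` as a functor `SingleObj G ⥤ Type u`. -/
def actFunctor (G : Type u) [Group G] (S : Type u) [MulAction G S] :
    SingleObj G ⥤ Type u where
  obj _ := S
  map g := TypeCat.ofHom (fun s => g • s)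
  map_id := by intro x; ext s; exact one_smul _ _
  map_comp := by intro x y z f g; ext s; exact mul_smul _ _ _

section FreeOrbit

variable {G : Type u} [Group G]

local notation "⋆" => SingleObj.star G

variable (G) in
abbrev freeOrbit : SingleObj G ⥤ Type u := actFunctor G (G ⧸ (⊥ : Subgroup G))

variable (G) in
def freeOrbitIsoCoyoneda : freeOrbit G ≅ coyoneda.obj (op ⋆) :=
  NatIso.ofComponents (fun _ => QuotientGroup.quotientBot.toEquiv.toIso) fun g => by
    ext q
    induction q using QuotientGroup.induction_on
    rfl

def freeOrbitHomEquiv (W : SingleObj G ⥤ Type u) : (freeOrbit G ⟶ W) ≃ W.obj ⋆ :=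
  (freeOrbitIsoCoyoneda G).homFromEquiv.trans coyonedaEquiv

lemma freeOrbitHomEquiv_comp {V W : SingleObj G ⥤ Type u} (η : freeOrbit G ⟶ V) (f : V ⟶ W) :
    freeOrbitHomEquiv W (η ≫ f) = f.app ⋆ (freeOrbitHomEquiv V η) := rfl

lemma freeOrbitHomEquiv_symm_comp {V W : SingleObj G ⥤ Type u} (s : V.obj ⋆) (f : V ⟶ W) :
    (freeOrbitHomEquiv V).symm s ≫ f = (freeOrbitHomEquiv W).symm (f.app ⋆ s) := by
  rw [Equiv.eq_symm_apply, freeOrbitHomEquiv_comp, Equiv.apply_symm_apply]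

def freeOrbitRightMul (g : G) : freeOrbit G ⟶ freeOrbit G :=
  (freeOrbitHomEquiv (freeOrbit G)).symm (QuotientGroup.mk g)

lemma freeOrbitRightMul_comp_symm (g : G) {W : SingleObj G ⥤ Type u} (s : W.obj ⋆) :
    freeOrbitRightMul g ≫ (freeOrbitHomEquiv W).symm s =
      (freeOrbitHomEquiv W).symm (W.map (g : ⋆ ⟶ ⋆) s) :=
  freeOrbitHomEquiv_symm_comp _ _

lemma freeOrbitHomEquiv_rightMul_comp (g : G) {W : SingleObj G ⥤ Type u} (η : freeOrbit G ⟶ W) :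
    freeOrbitHomEquiv W (freeOrbitRightMul g ≫ η) = W.map (g : ⋆ ⟶ ⋆) (freeOrbitHomEquiv W η) := by
  rw [← (freeOrbitHomEquiv W).symm_apply_apply η, freeOrbitRightMul_comp_symm,
    Equiv.apply_symm_apply, Equiv.apply_symm_apply]

lemma freeOrbitRightMul_one : freeOrbitRightMul (1 : G) = 𝟙 _ :=
  (freeOrbitHomEquiv _).symm_apply_eq.mpr rfl

lemma freeOrbitRightMul_mul (g h : G) :
    freeOrbitRightMul (g * h) = freeOrbitRightMul g ≫ freeOrbitRightMul h :=
  (freeOrbitRightMul_comp_symm g (W := freeOrbit G) (QuotientGroup.mk h)).symm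

end FreeOrbit

variable {G : Type u} [Group G] (F : Set (Subgroup G))

local notation "⋆" => SingleObj.star G

abbrev orbitProperty : ObjectProperty (SingleObj G ⥤ Type u) :=
  fun X => ∃ H ∈ F, X = actFunctor G (G ⧸ H)

abbrev OrbitCategory := (orbitProperty F).FullSubcategory

namespace OrbitCategory

def fixedPointPresheaf : (SingleObj G ⥤ Type u) ⥤ ((OrbitCategory F)ᵒᵖ ⥤ Type u) :=
  yoneda ⋙ (Functor.whiskeringLeft _ _ _).obj (orbitProperty F).ι.op

variable {F} (hbot : (⊥ : Subgroup G) ∈ F)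

def freeOrbitObj : OrbitCategory F := ⟨freeOrbit G, ⊥, hbot, rfl⟩

def fromFreeOrbitEquiv (d : OrbitCategory F) : (freeOrbitObj hbot ⟶ d) ≃ d.obj.obj ⋆ :=
  (orbitProperty F).fullyFaithfulι.homEquiv.trans (freeOrbitHomEquiv d.obj)

lemma fromFreeOrbitEquiv_symm_comp {d d' : OrbitCategory F} (s : d.obj.obj ⋆) (f : d ⟶ d') :
    (fromFreeOrbitEquiv hbot d).symm s ≫ f = (fromFreeOrbitEquiv hbot d').symm (f.hom.app ⋆ s) :=
  ObjectProperty.hom_ext _ (freeOrbitHomEquiv_symm_comp s f.hom)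

def rightMul (g : G) : freeOrbitObj hbot ⟶ freeOrbitObj hbot :=
  ObjectProperty.homMk (freeOrbitRightMul g)

lemma rightMul_comp_fromFreeOrbitEquiv_symm (g : G) {d : OrbitCategory F} (s : d.obj.obj ⋆) :
    rightMul hbot g ≫ (fromFreeOrbitEquiv hbot d).symm s =
      (fromFreeOrbitEquiv hbot d).symm (d.obj.map (g : ⋆ ⟶ ⋆) s) :=
  ObjectProperty.hom_ext _ (freeOrbitRightMul_comp_symm g s)

lemma rightMul_one : rightMul hbot 1 = 𝟙 _ :=
  ObjectProperty.hom_ext _ freeOrbitRightMul_one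

/-- Right multiplications compose in the reverse order, hence act on the opposite object. -/
def rightMulHom : G →* End (op (freeOrbitObj hbot)) where
  toFun g := (rightMul hbot g).op
  map_one' := congrArg Quiver.Hom.op (rightMul_one hbot)
  map_mul' g h :=
    congrArg Quiver.Hom.op (ObjectProperty.hom_ext _ (freeOrbitRightMul_mul g h))

def freeOrbitInclusion : SingleObj G ⥤ (OrbitCategory F)ᵒᵖ :=
  SingleObj.functor (rightMulHom hbot)

def evalFreeOrbit : ((OrbitCategory F)ᵒᵖ ⥤ Type u) ⥤ (SingleObj G ⥤ Type u) :=
  (Functor.whiskeringLeft _ _ _).obj (freeOrbitInclusion hbot)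

def evalFreeOrbitCounitIso : fixedPointPresheaf F ⋙ evalFreeOrbit hbot ≅ 𝟭 _ :=
  NatIso.ofComponents
    (fun Y => NatIso.ofComponents (fun _ => (freeOrbitHomEquiv Y).toIso) fun g => by
      ext η
      exact freeOrbitHomEquiv_rightMul_comp g η)
    fun _ => rfl

def elementToEvalFreeOrbit (X : (OrbitCategory F)ᵒᵖ ⥤ Type u) (d : OrbitCategory F)
    (x : X.obj (op d)) : d.obj ⟶ (evalFreeOrbit hbot).obj X :=
  SingleObj.natTrans (TypeCat.ofHom fun s => X.map ((fromFreeOrbitEquiv hbot d).symm s).op x)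
    fun g => by
      ext s
      change _ = X.map (rightMul hbot g).op (X.map ((fromFreeOrbitEquiv hbot d).symm s).op x)
      rw [← Functor.map_comp_apply, ← op_comp, rightMul_comp_fromFreeOrbitEquiv_symm]
      rfl

lemma elementToEvalFreeOrbit_map (X : (OrbitCategory F)ᵒᵖ ⥤ Type u) {d d' : OrbitCategory F}
    (f : d' ⟶ d) (x : X.obj (op d)) :
    elementToEvalFreeOrbit hbot X d' (X.map f.op x) = f.hom ≫ elementToEvalFreeOrbit hbot X d x := by
  ext _ s
  change X.map _ (X.map _ x) = X.map _ x
  rw [← Functor.map_comp_apply, ← op_comp, fromFreeOrbitEquiv_symm_comp]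
  rfl

lemma elementToEvalFreeOrbit_naturality {X X' : (OrbitCategory F)ᵒᵖ ⥤ Type u} (φ : X ⟶ X')
    (d : OrbitCategory F) (x : X.obj (op d)) :
    elementToEvalFreeOrbit hbot X' d (φ.app _ x) =
      elementToEvalFreeOrbit hbot X d x ≫ (evalFreeOrbit hbot).map φ := by
  ext _ s
  exact (φ.naturality_apply _ x).symm

lemma freeOrbitHomEquiv_elementToEvalFreeOrbit (X : (OrbitCategory F)ᵒᵖ ⥤ Type u)
    (ξ : X.obj (op (freeOrbitObj hbot))) :
    freeOrbitHomEquiv _ (elementToEvalFreeOrbit hbot X (freeOrbitObj hbot) ξ) = ξ := by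
  change X.map (rightMul hbot 1).op ξ = ξ
  rw [rightMul_one, op_id, Functor.map_id_apply]

lemma elementToEvalFreeOrbit_comp_counit (Y : SingleObj G ⥤ Type u) (d : OrbitCategory F)
    (η : d.obj ⟶ Y) :
    elementToEvalFreeOrbit hbot ((fixedPointPresheaf F).obj Y) d η ≫
      ((evalFreeOrbitCounitIso hbot).hom.app Y) = η := by
  ext _ s
  exact congrArg (η.app ⋆) ((fromFreeOrbitEquiv hbot d).apply_symm_apply s)

def evalFreeOrbitUnit : 𝟭 _ ⟶ evalFreeOrbit hbot ⋙ fixedPointPresheaf F where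
  app X :=
    { app d := TypeCat.ofHom (elementToEvalFreeOrbit hbot X d.unop)
      naturality _ _ f := by
        ext x
        exact elementToEvalFreeOrbit_map hbot X f.unop x }
  naturality _ _ φ := by
    ext d x
    exact elementToEvalFreeOrbit_naturality hbot φ d.unop x

def evalFreeOrbitAdjunction : evalFreeOrbit hbot ⊣ fixedPointPresheaf F :=
  Adjunction.mkOfUnitCounit
    { unit := evalFreeOrbitUnit hbot
      counit := (evalFreeOrbitCounitIso hbot).hom
      left_triangle := by
        ext X _ ξ
        exact freeOrbitHomEquiv_elementToEvalFreeOrbit hbot X ξ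
      right_triangle := by
        ext Y d η
        exact elementToEvalFreeOrbit_comp_counit hbot Y d.unop η }

end OrbitCategory

theorem stmt16_general (G : Type u) [Group G] (F : Set (Subgroup G))
    (hbot : (⊥ : Subgroup G) ∈ F) :
    letI P : (SingleObj G ⥤ Type u) → Prop :=
      fun X => ∃ H ∈ F, X = actFunctor G (G ⧸ H)
    letI U : (SingleObj G ⥤ Type u) ⥤ ((ObjectProperty.FullSubcategory P)ᵒᵖ ⥤ Type u) :=
      yoneda ⋙ (Functor.whiskeringLeft _ _ _).obj (ObjectProperty.ι P).op
    Nonempty U.Full ∧ Nonempty U.Faithful ∧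
    ∃ (T : ((ObjectProperty.FullSubcategory P)ᵒᵖ ⥤ Type u) ⥤ (SingleObj G ⥤ Type u))
      (adj : T ⊣ U),
      IsIso adj.counit ∧
      (∀ d : ObjectProperty.FullSubcategory P, Nonempty (T.obj (U.obj d.obj) ≅ d.obj)) ∧
      (∀ X : (ObjectProperty.FullSubcategory P)ᵒᵖ ⥤ Type u,
        Nonempty ((T.obj X).obj (SingleObj.star G)
          ≅ X.obj (op ⟨actFunctor G (G ⧸ (⊥ : Subgroup G)), ⊥, hbot, rfl⟩))) := by
  let adj := OrbitCategory.evalFreeOrbitAdjunction hbot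
  have : IsIso adj.counit :=
    inferInstanceAs (IsIso (OrbitCategory.evalFreeOrbitCounitIso hbot).hom)
  let hU := adj.fullyFaithfulROfIsIsoCounit
  exact ⟨⟨hU.full⟩, ⟨hU.faithful⟩, _, adj, this,
    fun d => ⟨(OrbitCategory.evalFreeOrbitCounitIso hbot).app d.obj⟩, fun _ => ⟨Iso.refl _⟩⟩

theorem stmt16 (G : Type u) [Group G] (F : Set (Subgroup G))
    (hbot : (⊥ : Subgroup G) ∈ F)
    (hle : ∀ H ∈ F, ∀ K : Subgroup G, K ≤ H → K ∈ F)
    (hconj : ∀ H ∈ F, ∀ g : G,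
      Subgroup.map (MulAut.conj g).toMonoidHom H ∈ F) :
    letI P : (SingleObj G ⥤ Type u) → Prop :=
      fun X => ∃ H ∈ F, X = actFunctor G (G ⧸ H)
    letI U : (SingleObj G ⥤ Type u) ⥤ ((ObjectProperty.FullSubcategory P)ᵒᵖ ⥤ Type u) :=
      yoneda ⋙ (Functor.whiskeringLeft _ _ _).obj (ObjectProperty.ι P).op
    Nonempty U.Full ∧ Nonempty U.Faithful ∧
    ∃ (T : ((ObjectProperty.FullSubcategory P)ᵒᵖ ⥤ Type u) ⥤ (SingleObj G ⥤ Type u))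
      (adj : T ⊣ U),
      IsIso adj.counit ∧
      (∀ d : ObjectProperty.FullSubcategory P, Nonempty (T.obj (U.obj d.obj) ≅ d.obj)) ∧
      (∀ X : (ObjectProperty.FullSubcategory P)ᵒᵖ ⥤ Type u,
        Nonempty ((T.obj X).obj (SingleObj.star G)
          ≅ X.obj (op ⟨actFunctor G (G ⧸ (⊥ : Subgroup G)), ⊥, hbot, rfl⟩))) :=
  stmt16_general G F hbot
end

section
/- Let G be a topological group. For any G-space Y, any closed subgroup H ≤ G, and any space V with trivial G-action, the natural map Y^H × V → (Y × V)^H is a homeomorphism. Consequently the unit η: X → UTX of the orbit-presheaf adjunction is an isomorphism for every cell complex X built from the generating cofibrations F_{G/H} × i (H ∈ F, i a cell inclusion S^{n-1} → D^n), since U preserves the colimits used in constructing cell complexes and η is an isomorphism on generators. -/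
/-!
The fixed-point condition on `Y × V` only involves the first coordinate, because `G` acts
trivially on `V`. So `(Y × V)^H` is the subspace of `Y × V` cut out by a condition on `Y`,
which is homeomorphic to the product of the corresponding subspace `Y^H` with `V`.
-/

theorem isHomeomorph_subtype_prod_mk {X V : Type*} [TopologicalSpace X] [TopologicalSpace V]
    {p : X → Prop} {q : X × V → Prop} (hqp : ∀ x v, q (x, v) ↔ p x) :
    IsHomeomorph (fun z : {x // p x} × V => (⟨(z.1.1, z.2), (hqp _ _).2 z.1.2⟩ : {w // q w})) := by
  rw [isHomeomorph_iff_exists_inverse]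
  refine ⟨by fun_prop, fun w => (⟨w.1.1, (hqp _ _).1 w.2⟩, w.1.2), fun _ => rfl, fun _ => rfl,
    by fun_prop⟩

theorem smul_prod_fst_eq_iff {G Y V : Type*} [SMul G Y] (g : G) (y : Y) (v : V) :
    (g • y, v) = (y, v) ↔ g • y = y := by
  simp only [Prod.mk.injEq, and_true]

theorem stmt17 (G : Type*) [Group G]
    (H : Subgroup G)
    (Y : Type*) [TopologicalSpace Y] [MulAction G Y]
    (V : Type*) [TopologicalSpace V] :
    IsHomeomorph (fun q : {y : Y // ∀ h : H, (h : G) • y = y} × V =>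
      (⟨(q.1.val, q.2), fun h => by
          show ((h : G) • q.1.val, q.2) = (q.1.val, q.2)
          rw [q.1.property h]⟩ :
        {p : Y × V // ∀ h : H, ((h : G) • p.1, p.2) = p})) :=
  isHomeomorph_subtype_prod_mk fun y v => forall_congr' fun h : H => smul_prod_fst_eq_iff (h : G) y v
end

section
/- Every relative cell complex built from the generating acyclic cofibrations J_F = {G/H × j : H ∈ F, j ∈ J}, where J consists of the inclusions i_0: D^n → D^n × I, is the inclusion of a G-deformation retract; in particular its H-fixed point map is a homotopy equivalence for every H ∈ F, so the acyclicity condition for the F-model structure on G-spaces holds. -/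
/-!
STATEMENT 18: Every relative cell complex built from the generating acyclic
cofibrations `J_F = {G/H × j : H ∈ F, j ∈ J}`, where `J` consists of the
inclusions `i₀ : Dⁿ → Dⁿ × I`, is the inclusion of a `G`-deformation retract.

Formalization: `G`-spaces are functors `SingleObj G ⥤ TopCat` for a
topological group `G`.  For a subgroup `H` and `n : ℕ`, `genMap H n` is the
`G`-map `G/H × Dⁿ → G/H × (Dⁿ × I)` (action on the orbit factor only, `Dⁿ`
the closed unit ball of `ℝⁿ`, `I` the unit interval).  `CellIncl F` is the
inductively defined class of relative `J_F`-cell complexes: it contains the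
generators for `H ∈ F` and is closed under coproducts, pushouts (cobase
change), and sequential (countable transfinite) composites, encoded by
colimit cocones.  `IsGDefRetractIncl i` says that there are an equivariant
retraction `r` and an equivariant homotopy rel `A` from the identity of `X`
to `i ∘ r`.  The theorem: every map in `CellIncl F` is the inclusion of a
`G`-deformation retract.
-/

open CategoryTheory Limits

noncomputable section

variable (G : Type) [Group G] [TopologicalSpace G] [IsTopologicalGroup G]

abbrev GTop := SingleObj G ⥤ TopCat.{0}

/-- The closed unit disk `Dⁿ ⊆ ℝⁿ`. -/
abbrev disk (n : ℕ) : Type := Metric.closedBall (0 : EuclideanSpace ℝ (Fin n)) 1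

variable {G}

/-- The `G`-space `G/H × A` for a space `A` with trivial action. -/
def orbProd (H : Subgroup G) (A : Type) [TopologicalSpace A] : GTop G where
  obj _ := TopCat.of ((G ⧸ H) × A)
  map g := show TopCat.of ((G ⧸ H) × A) ⟶ TopCat.of ((G ⧸ H) × A) from
    TopCat.ofHom ⟨fun p => (g • p.1, p.2),
      (((continuous_const_smul (g : G)).comp continuous_fst).prodMk continuous_snd)⟩
  map_id := by
    intro x
    apply TopCat.hom_ext
    apply ContinuousMap.ext
    rintro ⟨q, a⟩
    show ((1 : G) • q, a) = (q, a)
    rw [one_smul]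
  map_comp := by
    intro x y z f g
    apply TopCat.hom_ext
    apply ContinuousMap.ext
    rintro ⟨q, a⟩
    show ((g * f : G) • q, a) = (g • f • q, a)
    rw [mul_smul]

/-- The generating map `G/H × Dⁿ → G/H × (Dⁿ × I)`, `(x, d) ↦ (x, (d, 0))`. -/
def genMap (H : Subgroup G) (n : ℕ) :
    orbProd H (disk n) ⟶ orbProd H (disk n × unitInterval) where
  app _ := show TopCat.of ((G ⧸ H) × disk n) ⟶ TopCat.of ((G ⧸ H) × (disk n × unitInterval))
    from TopCat.ofHom ⟨fun p => (p.1, (p.2, 0)),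
      (continuous_fst.prodMk (continuous_snd.prodMk continuous_const))⟩
  naturality := by
    intro x y g
    apply TopCat.hom_ext
    apply ContinuousMap.ext
    rintro ⟨q, a⟩
    rfl

/-- The class of relative `J_F`-cell complexes: generated by the maps
`genMap H n` (`H ∈ F`) under coproducts, pushouts and sequential composites. -/
inductive CellIncl (F : Set (Subgroup G)) : MorphismProperty (GTop G)
  | gen (H : Subgroup G) (hH : H ∈ F) (n : ℕ) : CellIncl F (genMap H n)
  | coprod {ι : Type} {A B : ι → GTop G} (f : ∀ i, A i ⟶ B i)
      (hf : ∀ i, CellIncl F (f i))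
      (cA : Cofan A) (hA : IsColimit cA) (cB : Cofan B) (hB : IsColimit cB)
      (φ : cA.pt ⟶ cB.pt) (hφ : ∀ i, cA.inj i ≫ φ = f i ≫ cB.inj i) :
      CellIncl F φ
  | pushout {A B A' B' : GTop G} {f : A ⟶ B} {f' : A' ⟶ B'}
      (s : A ⟶ A') (t : B ⟶ B') (hf : CellIncl F f) (h : IsPushout s f f' t) :
      CellIncl F f'
  | seq (S : ℕ ⥤ GTop G)
      (hS : ∀ n : ℕ, CellIncl F (S.map (homOfLE (Nat.le_succ n))))
      (c : Cocone S) (hc : IsColimit c) : CellIncl F (c.ι.app 0)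

/-- `i : A ⟶ X` is the inclusion of a `G`-deformation retract: there are an
equivariant retraction `r : X → A` and an equivariant homotopy rel `A` from
the identity of `X` to `i ∘ r`. -/
def IsGDefRetractIncl {A X : GTop G} (i : A ⟶ X) : Prop :=
  ∃ (r : C(X.obj (SingleObj.star G), A.obj (SingleObj.star G)))
    (h : C(X.obj (SingleObj.star G) × unitInterval, X.obj (SingleObj.star G))),
    (∀ (g : G) (x : X.obj (SingleObj.star G)), r (X.map g x) = A.map g (r x)) ∧
    (∀ a : A.obj (SingleObj.star G), r (i.app (SingleObj.star G) a) = a) ∧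
    (∀ (g : G) (x : X.obj (SingleObj.star G)) (t : unitInterval),
      h (X.map g x, t) = X.map g (h (x, t))) ∧
    (∀ x, h (x, 0) = x) ∧
    (∀ x, h (x, 1) = i.app (SingleObj.star G) (r x)) ∧
    (∀ (a : A.obj (SingleObj.star G)) (t : unitInterval),
      h (i.app (SingleObj.star G) a, t) = i.app (SingleObj.star G) a)

/-!
Each generator `G/H × Dⁿ → G/H × Dⁿ × I` is the inclusion of an equivariant deformation
retract: squeeze the interval coordinate to `0`.  Recording the homotopy as a `G`-map
`X ⟶ Xᴵ` into the path object makes the data `(r, h)` a pair of morphisms, so it descends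
along coproducts and pushouts by the universal property.  For a sequential composite
`X₀ → X₁ → ⋯ → X`, the deformations of `Xₖ₊₁` onto `Xₖ` are run during the time intervals
`[2⁻ᵏ⁻², 2⁻ᵏ⁻¹]`; the resulting homotopies of the stages `Xₙ` are compatible with the
inclusions and hence assemble into a map `X ⟶ Xᴵ`.
-/

namespace GTop

section

variable {G : Type} [Group G]

abbrev space (X : GTop G) : TopCat.{0} := X.obj (SingleObj.star G)

lemma hom_ext {X Y : GTop G} {f g : X ⟶ Y}
    (h : ∀ x : space X, f.app _ x = g.app _ x) : f = g :=
  NatTrans.ext (funext fun _ => TopCat.ext h)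

lemma congr_app_apply {X Y : GTop G} {f g : X ⟶ Y} (h : f = g) (x : space X) :
    f.app _ x = g.app _ x := by
  rw [h]

def ofEquivariant {X Y : GTop G} (φ : C(space X, space Y))
    (hφ : ∀ (g : G) (x : space X), φ (X.map g x) = Y.map g (φ x)) : X ⟶ Y where
  app _ := TopCat.ofHom φ
  naturality _ _ g := TopCat.ext (hφ g)

abbrev _root_.TopCat.pathSpace : TopCat.{0} ⥤ TopCat.{0} where
  obj Y := TopCat.of C(unitInterval, Y)
  map f := TopCat.ofHom ⟨f.hom.comp, ContinuousMap.continuous_postcomp f.hom⟩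

abbrev path (X : GTop G) : GTop G := X ⋙ TopCat.pathSpace

abbrev toPath {X : GTop G} (p : space (path X)) : C(unitInterval, space X) := p

def pathMap {X Y : GTop G} (f : X ⟶ Y) : path X ⟶ path Y :=
  Functor.whiskerRight f TopCat.pathSpace

def ev (t : unitInterval) (X : GTop G) : path X ⟶ X :=
  ofEquivariant (⟨fun p => p t, continuous_eval_const t⟩ : C(C(unitInterval, space X), space X))
    fun _ _ => rfl

def const (X : GTop G) : X ⟶ path X :=
  ofEquivariant ContinuousMap.const' fun _ _ => rfl

lemma pathMap_comp {X Y Z : GTop G} (f : X ⟶ Y) (g : Y ⟶ Z) :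
    pathMap (f ≫ g) = pathMap f ≫ pathMap g :=
  rfl

lemma pathMap_ev {X Y : GTop G} (f : X ⟶ Y) (t : unitInterval) :
    pathMap f ≫ ev t Y = ev t X ≫ f :=
  rfl

lemma const_pathMap {X Y : GTop G} (f : X ⟶ Y) : const X ≫ pathMap f = f ≫ const Y :=
  rfl

lemma const_ev (t : unitInterval) (X : GTop G) : const X ≫ ev t X = 𝟙 X :=
  rfl

def toHomotopy {X Y : GTop G} (h : X ⟶ path Y) : C(space X × unitInterval, space Y) :=
  ContinuousMap.uncurry (h.app _).hom

lemma toHomotopy_apply {X Y : GTop G} (h : X ⟶ path Y) (x : space X) (t : unitInterval) :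
    toHomotopy h (x, t) = (h ≫ ev t Y).app _ x :=
  rfl

lemma toHomotopy_map {X Y : GTop G} (h : X ⟶ path Y) (g : G) (x : space X) (t : unitInterval) :
    toHomotopy h (X.map g x, t) = Y.map g (toHomotopy h (x, t)) := by
  show toPath (h.app _ (X.map g x)) t = _
  rw [NatTrans.naturality_apply]
  rfl

def ofHomotopy {X Y : GTop G} (H : C(space X × unitInterval, space Y))
    (hH : ∀ (g : G) (x : space X) (t : unitInterval), H (X.map g x, t) = Y.map g (H (x, t))) :
    X ⟶ path Y :=
  ofEquivariant H.curry fun g x => ContinuousMap.ext (hH g x)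

def IsPathDefRetract {A X : GTop G} (i : A ⟶ X) : Prop :=
  ∃ (r : X ⟶ A) (h : X ⟶ path X),
    i ≫ r = 𝟙 A ∧ h ≫ ev 0 X = 𝟙 X ∧ h ≫ ev 1 X = r ≫ i ∧ i ≫ h = i ≫ const X

lemma IsPathDefRetract.isGDefRetractIncl {A X : GTop G} {i : A ⟶ X}
    (hi : IsPathDefRetract i) : IsGDefRetractIncl i := by
  obtain ⟨r, h, hr, h₀, h₁, hrel⟩ := hi
  exact ⟨(r.app _).hom, toHomotopy h, fun g x => NatTrans.naturality_apply r g x,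
    congr_app_apply hr, toHomotopy_map h, congr_app_apply h₀, congr_app_apply h₁,
    fun a t => congrArg (fun p => toPath p t) (congr_app_apply hrel a)⟩

lemma isPathDefRetract_of_isColimit_cofan {ι : Type} {A B : ι → GTop G} (f : ∀ i, A i ⟶ B i)
    (hf : ∀ i, IsPathDefRetract (f i)) {cA : Cofan A} (hA : IsColimit cA) {cB : Cofan B}
    (hB : IsColimit cB) (φ : cA.pt ⟶ cB.pt) (hφ : ∀ i, cA.inj i ≫ φ = f i ≫ cB.inj i) :
    IsPathDefRetract φ := by
  choose r h hr h₀ h₁ hrel using hf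
  have hφ' : ∀ i {Z} (k : cB.pt ⟶ Z), cA.inj i ≫ φ ≫ k = f i ≫ cB.inj i ≫ k := fun i Z k => by
    rw [← Category.assoc, hφ, Category.assoc]
  refine ⟨Cofan.IsColimit.desc hB fun i => r i ≫ cA.inj i,
    Cofan.IsColimit.desc hB fun i => h i ≫ pathMap (cB.inj i), ?_, ?_, ?_, ?_⟩
  · refine Cofan.IsColimit.hom_ext hA _ _ fun i => ?_
    rw [hφ', Cofan.IsColimit.fac, ← Category.assoc, hr, Category.id_comp, Category.comp_id]
  · refine Cofan.IsColimit.hom_ext hB _ _ fun i => ?_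
    rw [Cofan.IsColimit.fac_assoc, Category.assoc, pathMap_ev, ← Category.assoc, h₀,
      Category.id_comp, Category.comp_id]
  · refine Cofan.IsColimit.hom_ext hB _ _ fun i => ?_
    rw [Cofan.IsColimit.fac_assoc, Category.assoc, pathMap_ev, ← Category.assoc, h₁,
      Cofan.IsColimit.fac_assoc, Category.assoc, Category.assoc, hφ]
  · refine Cofan.IsColimit.hom_ext hA _ _ fun i => ?_
    rw [hφ', hφ', Cofan.IsColimit.fac, ← Category.assoc, hrel, Category.assoc, const_pathMap]

lemma IsPathDefRetract.of_isPushout {A B A' B' : GTop G} {f : A ⟶ B} {f' : A' ⟶ B'}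
    {s : A ⟶ A'} {t : B ⟶ B'} (hf : IsPathDefRetract f) (hpo : IsPushout s f f' t) :
    IsPathDefRetract f' := by
  obtain ⟨r, h, hr, h₀, h₁, hrel⟩ := hf
  have wr : s ≫ 𝟙 A' = f ≫ r ≫ s := by
    rw [Category.comp_id, ← Category.assoc, hr, Category.id_comp]
  have wh : s ≫ f' ≫ const B' = f ≫ h ≫ pathMap t := by
    rw [← Category.assoc, hpo.w, Category.assoc, ← const_pathMap, ← Category.assoc, ← hrel,
      Category.assoc]
  refine ⟨hpo.desc (𝟙 A') (r ≫ s) wr, hpo.desc (f' ≫ const B') (h ≫ pathMap t) wh,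
    hpo.inl_desc _ _ _, ?_, ?_, hpo.inl_desc _ _ _⟩
  · refine hpo.hom_ext ?_ ?_
    · rw [hpo.inl_desc_assoc, Category.assoc, const_ev, Category.comp_id]
    · rw [hpo.inr_desc_assoc, Category.assoc, pathMap_ev, ← Category.assoc, h₀,
        Category.id_comp, Category.comp_id]
  · refine hpo.hom_ext ?_ ?_
    · rw [hpo.inl_desc_assoc, Category.assoc, const_ev, Category.comp_id, hpo.inl_desc_assoc,
        Category.id_comp]
    · rw [hpo.inr_desc_assoc, Category.assoc, pathMap_ev, ← Category.assoc, h₁,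
        hpo.inr_desc_assoc, Category.assoc, Category.assoc, hpo.w]

/-- The affine bijection `[2⁻ⁿ⁻², 2⁻ⁿ⁻¹] → [0, 1]`, clamped to `0` on the left and `1` on the
right. -/
def rescale (n : ℕ) : C(unitInterval, unitInterval) :=
  ⟨fun t => Set.projIcc 0 1 zero_le_one (2 ^ (n + 2) * t - 1), by fun_prop⟩

lemma rescale_of_le {n : ℕ} {t : unitInterval} (ht : (t : ℝ) ≤ 2⁻¹ ^ (n + 2)) :
    rescale n t = 0 := by
  have hpow : (2 : ℝ) ^ (n + 2) * 2⁻¹ ^ (n + 2) = 1 := by rw [← mul_pow]; norm_num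
  have : (2 : ℝ) ^ (n + 2) * t - 1 ≤ 0 := by
    nlinarith [pow_pos (two_pos : (0 : ℝ) < 2) (n + 2)]
  exact Set.projIcc_of_le_left zero_le_one this

lemma rescale_of_ge {n : ℕ} {t : unitInterval} (ht : 2⁻¹ ^ (n + 1) ≤ (t : ℝ)) :
    rescale n t = 1 := by
  have hpow : (2 : ℝ) ^ (n + 2) * 2⁻¹ ^ (n + 1) = 2 := by
    rw [pow_succ, mul_right_comm, ← mul_pow]; norm_num
  have : 1 ≤ (2 : ℝ) ^ (n + 2) * t - 1 := by
    nlinarith [pow_pos (two_pos : (0 : ℝ) < 2) (n + 2)]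
  exact Set.projIcc_of_right_le zero_le_one this

section Telescope

variable (S : ℕ ⥤ GTop G) (r : ∀ n, S.obj (n + 1) ⟶ S.obj n)
  (h : ∀ n, S.obj (n + 1) ⟶ path (S.obj (n + 1)))

def retractToZero : ∀ n, S.obj n ⟶ S.obj 0
  | 0 => 𝟙 _
  | n + 1 => r n ≫ retractToZero n

/-- During `[2⁻ᵏ⁻², 2⁻ᵏ⁻¹]` (`k < n`) this runs the deformation of stage `k + 1` onto stage `k`;
it is stationary up to time `2⁻ⁿ⁻¹`. -/
def telescope : ∀ n, space (S.obj n) → unitInterval → space (S.obj n)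
  | 0, y, _ => y
  | n + 1, y, t =>
    if (t : ℝ) ≤ 2⁻¹ ^ (n + 1) then toHomotopy (h n) (y, rescale n t)
    else (S.map (homOfLE n.le_succ)).app _ (telescope n ((r n).app _ y) t)

lemma telescope_map (n : ℕ) (g : G) (y : space (S.obj n)) (t : unitInterval) :
    telescope S r h n ((S.obj n).map g y) t = (S.obj n).map g (telescope S r h n y t) := by
  induction n with
  | zero => rfl
  | succ n ih =>
    simp only [telescope]
    split_ifs
    · exact toHomotopy_map _ g y _
    · rw [NatTrans.naturality_apply, ih, NatTrans.naturality_apply]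

lemma telescope_one (n : ℕ) (y : space (S.obj n)) :
    telescope S r h n y 1 = (S.map (homOfLE n.zero_le)).app _ ((retractToZero S r n).app _ y) := by
  induction n with
  | zero => simp [telescope, retractToZero]
  | succ n ih =>
    have : ¬ ((1 : unitInterval) : ℝ) ≤ 2⁻¹ ^ (n + 1) := by
      simpa using pow_lt_one₀ (by norm_num : (0 : ℝ) ≤ 2⁻¹) (by norm_num) n.succ_ne_zero
    rw [telescope, if_neg this, ih, ← ConcreteCategory.comp_apply, ← NatTrans.comp_app,
      ← S.map_comp]
    rfl

variable {h} (h₀ : ∀ n, h n ≫ ev 0 _ = 𝟙 _)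
include h₀

lemma telescope_of_le (n : ℕ) (y : space (S.obj n)) {t : unitInterval}
    (ht : (t : ℝ) ≤ 2⁻¹ ^ (n + 1)) : telescope S r h n y t = y := by
  cases n with
  | zero => rfl
  | succ n =>
    have ht' : (t : ℝ) ≤ 2⁻¹ ^ (n + 1) :=
      ht.trans (pow_le_pow_of_le_one (by norm_num) (by norm_num) (by omega))
    rw [telescope, if_pos ht', rescale_of_le ht, toHomotopy_apply, h₀]
    rfl

variable (h₁ : ∀ n, h n ≫ ev 1 _ = r n ≫ S.map (homOfLE n.le_succ))
include h₁

lemma continuous_telescope (n : ℕ) :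
    Continuous fun p : space (S.obj n) × unitInterval => telescope S r h n p.1 p.2 := by
  induction n with
  | zero => exact continuous_fst
  | succ n ih =>
    simp only [telescope]
    refine Continuous.if_le (by fun_prop) ?_ (by fun_prop) continuous_const ?_
    · exact (S.map (homOfLE n.le_succ) |>.app _).hom.continuous.comp
        (ih.comp ((((r n).app _).hom.continuous.comp continuous_fst).prodMk continuous_snd))
    · rintro ⟨y, t⟩ (ht : (t : ℝ) = _)
      rw [telescope_of_le S r h₀ n _ ht.le, rescale_of_ge ht.ge, toHomotopy_apply, h₁]
      rfl

def telescopeHom (n : ℕ) : S.obj n ⟶ path (S.obj n) :=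
  ofHomotopy ⟨fun p => telescope S r h n p.1 p.2, continuous_telescope S r h₀ h₁ n⟩
    (telescope_map S r h n)

lemma telescopeHom_ev_zero (n : ℕ) : telescopeHom S r h₀ h₁ n ≫ ev 0 _ = 𝟙 _ :=
  hom_ext fun y => telescope_of_le S r h₀ n y (by simp only [Set.Icc.coe_zero]; positivity)

lemma telescopeHom_ev_one (n : ℕ) :
    telescopeHom S r h₀ h₁ n ≫ ev 1 _ = retractToZero S r n ≫ S.map (homOfLE n.zero_le) :=
  hom_ext (telescope_one S r h n)

lemma telescopeHom_zero : telescopeHom S r h₀ h₁ 0 = const _ :=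
  rfl

lemma map_comp_telescopeHom (hr : ∀ n, S.map (homOfLE n.le_succ) ≫ r n = 𝟙 _)
    (hrel : ∀ n, S.map (homOfLE n.le_succ) ≫ h n = S.map (homOfLE n.le_succ) ≫ const _)
    (n : ℕ) :
    S.map (homOfLE n.le_succ) ≫ telescopeHom S r h₀ h₁ (n + 1) =
      telescopeHom S r h₀ h₁ n ≫ pathMap (S.map (homOfLE n.le_succ)) := by
  refine hom_ext fun y => ContinuousMap.ext fun t => ?_
  show telescope S r h (n + 1) ((S.map (homOfLE n.le_succ)).app _ y) t =
    (S.map (homOfLE n.le_succ)).app _ (telescope S r h n y t)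
  rw [telescope]
  split_ifs with ht
  · rw [telescope_of_le S r h₀ n y ht]
    exact congrArg (fun p => toPath p _) (congr_app_apply (hrel n) y)
  · rw [← ConcreteCategory.comp_apply, ← NatTrans.comp_app, hr]
    rfl

end Telescope

lemma isPathDefRetract_of_isColimit_seq (S : ℕ ⥤ GTop G)
    (hS : ∀ n : ℕ, IsPathDefRetract (S.map (homOfLE n.le_succ))) {c : Cocone S}
    (hc : IsColimit c) : IsPathDefRetract (c.ι.app 0) := by
  choose r h hr h₀ h₁ hrel using hS
  let H := telescopeHom S r h₀ h₁
  let cR : Cocone S := ⟨S.obj 0, NatTrans.ofSequence (retractToZero S r) fun n => by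
    rw [retractToZero, ← Category.assoc, hr, Category.id_comp]
    exact (Category.comp_id _).symm⟩
  let cH : Cocone S := ⟨path c.pt, NatTrans.ofSequence (fun n => H n ≫ pathMap (c.ι.app n))
    fun n => by
      rw [← Category.assoc, map_comp_telescopeHom S r h₀ h₁ hr hrel, Category.assoc,
        ← pathMap_comp, Cocone.w]
      exact (Category.comp_id _).symm⟩
  refine ⟨hc.desc cR, hc.desc cH, hc.fac cR 0, hc.hom_ext fun n => ?_, hc.hom_ext fun n => ?_, ?_⟩
  · rw [hc.fac_assoc]
    show (H n ≫ pathMap (c.ι.app n)) ≫ ev 0 _ = c.ι.app n ≫ 𝟙 _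
    rw [Category.assoc, pathMap_ev, ← Category.assoc, telescopeHom_ev_zero, Category.id_comp,
      Category.comp_id]
  · rw [hc.fac_assoc, ← Category.assoc, hc.fac]
    show (H n ≫ pathMap (c.ι.app n)) ≫ ev 1 _ = retractToZero S r n ≫ c.ι.app 0
    rw [Category.assoc, pathMap_ev, ← Category.assoc, telescopeHom_ev_one, Category.assoc,
      Cocone.w]
  · rw [hc.fac]
    show telescopeHom S r h₀ h₁ 0 ≫ pathMap (c.ι.app 0) = _
    rw [telescopeHom_zero, const_pathMap]

end

lemma isPathDefRetract_genMap (H : Subgroup G) (n : ℕ) : IsPathDefRetract (genMap H n) := by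
  refine ⟨ofEquivariant ⟨fun p : (G ⧸ H) × (disk n × unitInterval) => (p.1, p.2.1), by fun_prop⟩
      fun _ _ => rfl,
    ofHomotopy ⟨fun q : ((G ⧸ H) × (disk n × unitInterval)) × unitInterval =>
      (q.1.1, q.1.2.1, min q.1.2.2 (unitInterval.symm q.2)), by fun_prop⟩ fun _ _ _ => rfl,
    rfl, ?_, ?_, ?_⟩
  · refine hom_ext fun p => ?_
    show ((p.1, p.2.1, min p.2.2 (unitInterval.symm 0)) : (G ⧸ H) × (disk n × unitInterval)) = p
    rw [unitInterval.symm_zero, min_eq_left unitInterval.le_one']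
    rfl
  · refine hom_ext fun p => ?_
    show ((p.1, p.2.1, min p.2.2 (unitInterval.symm 1)) : (G ⧸ H) × (disk n × unitInterval))
      = (p.1, p.2.1, 0)
    simp
  · refine hom_ext fun p => ContinuousMap.ext fun t => ?_
    show ((p.1, p.2, min 0 (unitInterval.symm t)) : (G ⧸ H) × (disk n × unitInterval))
      = (p.1, p.2, 0)
    simp

end GTop

theorem stmt18_general (F : Set (Subgroup G))
    {A X : GTop G} (f : A ⟶ X) (hf : CellIncl F f) :
    IsGDefRetractIncl f := by
  refine GTop.IsPathDefRetract.isGDefRetractIncl ?_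
  induction hf with
  | gen H _ n => exact GTop.isPathDefRetract_genMap H n
  | coprod f _ _ hA _ hB φ hφ ih => exact GTop.isPathDefRetract_of_isColimit_cofan f ih hA hB φ hφ
  | pushout _ _ _ hpo ih => exact ih.of_isPushout hpo
  | seq S _ _ hc ih => exact GTop.isPathDefRetract_of_isColimit_seq S ih hc

theorem stmt18 (F : Set (Subgroup G)) (hF : ∀ H ∈ F, IsClosed (H : Set G))
    {A X : GTop G} (f : A ⟶ X) (hf : CellIncl F f) :
    IsGDefRetractIncl f :=
  stmt18_general F f hf

end
end
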